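/- Let b₁, c₂ be integers with b₁ ≥ 0 and b₁ ≥ c₂. Let α : ℂ[x₁,…,x₆] → ℂ[y₁^{±1}, y₂^{±1}, y₃^{±1}] be the ℂ-algebra homomorphism determined by α(x₁) = y₁, α(x₂) = y₂, α(x₃) = y₁y₂^{−1}, α(x₄) = y₁^{−b₁−1}y₂y₃, α(x₅) = y₃, α(x₆) = y₁^{−c₂}y₃. Then the kernel of α equals the ideal generated by the three binomials x₁ − x₂x₃, x₂^{b₁} x₃^{b₁+1} x₄ − x₅, and x₂^{b₁−c₂} x₃^{b₁+1−c₂} x₄ − x₆. -/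

import Mathlib

/-!
The images of `x₂, x₃, x₄` are Laurent monomials whose exponent vectors `(0,1,0)`,
`(1,-1,0)`, `(-(b₁+1),1,1)` are linearly independent, so `α` is injective on
`ℂ[x₂, x₃, x₄]`. Modulo the three binomials, `x₁`, `x₅`, `x₆` equal monomials in
`x₂, x₃, x₄`, so every polynomial is congruent to one in `ℂ[x₂, x₃, x₄]`; if it lies in
`ker α`, that representative is zero.
-/

open MvPolynomial

/-- The Laurent monomial `y₁^{v 0} y₂^{v 1} y₃^{v 2}` in the Laurent polynomial ring
`ℂ[y₁^{±1}, y₂^{±1}, y₃^{±1}]`, realized as `AddMonoidAlgebra ℂ (Fin 3 → ℤ)`. -/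
noncomputable def laurentMonomial3 (v : Fin 3 → ℤ) : AddMonoidAlgebra ℂ (Fin 3 → ℤ) :=
  AddMonoidAlgebra.single v 1

open Function

theorem MvPolynomial.sub_mem_of_forall_X_sub_mem {R σ S : Type*} [CommSemiring R] [CommRing S]
    [Algebra R S] (f g : MvPolynomial σ R →ₐ[R] S) (I : Ideal S)
    (h : ∀ i, f (X i) - g (X i) ∈ I) (p : MvPolynomial σ R) : f p - g p ∈ I := by
  rw [← Ideal.Quotient.eq]
  have : (Ideal.Quotient.mkₐ R I).comp f = (Ideal.Quotient.mkₐ R I).comp g :=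
    algHom_ext fun i => Ideal.Quotient.eq.mpr (h i)
  exact DFunLike.congr_fun this p

theorem MvPolynomial.aeval_single_eq_mapDomainAlgHom {R σ M : Type*} [CommSemiring R]
    [AddCommMonoid M] (v : σ → M) :
    aeval (fun i => AddMonoidAlgebra.single (v i) (1 : R)) =
      AddMonoidAlgebra.mapDomainAlgHom R R (Finsupp.linearCombination ℕ v).toAddMonoidHom := by
  refine algHom_ext fun i => ?_
  rw [aeval_X]
  change _ = AddMonoidAlgebra.mapDomain _ (AddMonoidAlgebra.single (Finsupp.single i 1) 1)
  rw [AddMonoidAlgebra.mapDomain_single]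
  simp

theorem MvPolynomial.injective_aeval_single {R σ M : Type*} [CommSemiring R] [AddCommMonoid M]
    {v : σ → M} (hv : Injective (Finsupp.linearCombination ℕ v)) :
    Injective (aeval (R := R) fun i => AddMonoidAlgebra.single (v i) (1 : R)) := by
  rw [aeval_single_eq_mapDomainAlgHom]
  exact AddMonoidAlgebra.mapDomain_injective hv

theorem RingHom.ker_eq_of_forall_sub_mem {A B C F G : Type*} [CommRing A] [Semiring B] [Ring C]
    [FunLike F A C] [RingHomClass F A C] [FunLike G B A] [RingHomClass G B A]
    (α : F) (ι : G) (ψ : A → B) (I : Ideal A) (hI : I ≤ RingHom.ker α)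
    (hinj : Injective (α ∘ ι)) (hψ : ∀ a, a - ι (ψ a) ∈ I) :
    RingHom.ker α = I := by
  refine le_antisymm (fun a ha => ?_) hI
  have hαι : α (ι (ψ a)) = 0 := by
    simpa [RingHom.mem_ker.mp ha] using hI (hψ a)
  have hψa : ψ a = 0 := hinj (by simpa using hαι)
  simpa [hψa] using hψ a

namespace ToricCase313

noncomputable def toricMap (b₁ c₂ : ℤ) :
    MvPolynomial (Fin 6) ℂ →ₐ[ℂ] AddMonoidAlgebra ℂ (Fin 3 → ℤ) :=
  aeval ![laurentMonomial3 ![1, 0, 0], laurentMonomial3 ![0, 1, 0],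
    laurentMonomial3 ![1, -1, 0], laurentMonomial3 ![-(b₁ + 1), 1, 1],
    laurentMonomial3 ![0, 0, 1], laurentMonomial3 ![-c₂, 0, 1]]

noncomputable def binomialIdeal (b₁ c₂ : ℤ) : Ideal (MvPolynomial (Fin 6) ℂ) :=
  Ideal.span {X 0 - X 1 * X 2,
    X 1 ^ b₁.toNat * X 2 ^ (b₁ + 1).toNat * X 3 - X 4,
    X 1 ^ (b₁ - c₂).toNat * X 2 ^ (b₁ + 1 - c₂).toNat * X 3 - X 5}

def freeExponents (b₁ : ℤ) : Fin 3 → Fin 3 → ℤ :=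
  ![![0, 1, 0], ![1, -1, 0], ![-(b₁ + 1), 1, 1]]

theorem linearCombination_freeExponents (b₁ : ℤ) (m : Fin 3 →₀ ℕ) :
    Finsupp.linearCombination ℕ (freeExponents b₁) m =
      ![m 1 - m 2 * (b₁ + 1), m 0 - m 1 + m 2, m 2] := by
  ext j
  fin_cases j <;>
    simp [Finsupp.linearCombination_apply, Finsupp.sum_fintype, Fin.sum_univ_three,
      freeExponents] <;>
    ring

theorem linearCombination_freeExponents_injective (b₁ : ℤ) :
    Injective (Finsupp.linearCombination ℕ (freeExponents b₁)) := by
  intro m n h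
  simp only [linearCombination_freeExponents, Matrix.vecCons_inj, Nat.cast_inj, and_true] at h
  obtain ⟨h0, h1, h2⟩ := h
  rw [h2] at h0
  ext j
  fin_cases j <;> simp <;> omega

theorem toricMap_comp_rename (b₁ c₂ : ℤ) :
    (toricMap b₁ c₂).comp (rename ![1, 2, 3]) =
      aeval fun i => AddMonoidAlgebra.single (freeExponents b₁ i) 1 := by
  refine algHom_ext fun i => ?_
  simp only [AlgHom.comp_apply, rename_X, toricMap, aeval_X]
  fin_cases i <;> rfl

noncomputable def eliminate (b₁ c₂ : ℤ) :
    MvPolynomial (Fin 6) ℂ →ₐ[ℂ] MvPolynomial (Fin 3) ℂ :=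
  aeval ![X 0 * X 1, X 0, X 1, X 2,
    X 0 ^ b₁.toNat * X 1 ^ (b₁ + 1).toNat * X 2,
    X 0 ^ (b₁ - c₂).toNat * X 1 ^ (b₁ + 1 - c₂).toNat * X 2]

theorem sub_rename_eliminate_mem (b₁ c₂ : ℤ) (p : MvPolynomial (Fin 6) ℂ) :
    p - rename ![1, 2, 3] (eliminate b₁ c₂ p) ∈ binomialIdeal b₁ c₂ := by
  refine sub_mem_of_forall_X_sub_mem (AlgHom.id ℂ _) ((rename _).comp (eliminate b₁ c₂)) _
    (fun i => ?_) p
  fin_cases i <;>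
    simp only [Fin.zero_eta, Fin.mk_one, Fin.reduceFinMk, AlgHom.coe_id, id_eq, AlgHom.coe_comp,
      Function.comp_apply, eliminate, aeval_X, Matrix.cons_val, Matrix.cons_val_zero,
      Matrix.cons_val_one, map_mul, map_pow, rename_X, sub_self, zero_mem]
  · exact Ideal.subset_span (by simp)
  all_goals exact sub_mem_comm_iff.mp (Ideal.subset_span (by simp))

theorem binomialIdeal_le_ker (b₁ c₂ : ℤ) (hb₁ : 0 ≤ b₁) (hc₂ : c₂ ≤ b₁) :
    binomialIdeal b₁ c₂ ≤ RingHom.ker (toricMap b₁ c₂) := by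
  rw [binomialIdeal, Ideal.span_le]
  rintro g (rfl | rfl | rfl) <;>
    simp [toricMap, laurentMonomial3, AddMonoidAlgebra.single_pow,
      AddMonoidAlgebra.single_mul_single, sub_eq_zero, AddMonoidAlgebra.single_left_inj,
      funext_iff, Fin.forall_fin_succ] <;>
    omega

theorem injective_toricMap_comp_rename (b₁ c₂ : ℤ) :
    Injective (toricMap b₁ c₂ ∘ rename ![1, 2, 3]) := by
  rw [← AlgHom.coe_comp, toricMap_comp_rename]
  exact injective_aeval_single (linearCombination_freeExponents_injective b₁)

end ToricCase313

theorem toric_ideal_case_3_1_3 (b₁ c₂ : ℤ) (hb₁ : 0 ≤ b₁) (hc₂ : c₂ ≤ b₁) :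
    RingHom.ker (MvPolynomial.aeval
        ![laurentMonomial3 ![1, 0, 0], laurentMonomial3 ![0, 1, 0],
          laurentMonomial3 ![1, -1, 0], laurentMonomial3 ![-(b₁ + 1), 1, 1],
          laurentMonomial3 ![0, 0, 1], laurentMonomial3 ![-c₂, 0, 1]] :
      MvPolynomial (Fin 6) ℂ →ₐ[ℂ] AddMonoidAlgebra ℂ (Fin 3 → ℤ)) =
    Ideal.span {(X 0 - X 1 * X 2 : MvPolynomial (Fin 6) ℂ),
      X 1 ^ b₁.toNat * X 2 ^ (b₁ + 1).toNat * X 3 - X 4,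
      X 1 ^ (b₁ - c₂).toNat * X 2 ^ (b₁ + 1 - c₂).toNat * X 3 - X 5} := by
  change RingHom.ker (ToricCase313.toricMap b₁ c₂) = ToricCase313.binomialIdeal b₁ c₂
  open ToricCase313 in
  exact RingHom.ker_eq_of_forall_sub_mem (toricMap b₁ c₂) (rename ![1, 2, 3])
    (eliminate b₁ c₂) (binomialIdeal b₁ c₂) (binomialIdeal_le_ker b₁ c₂ hb₁ hc₂)
    (injective_toricMap_comp_rename b₁ c₂) (sub_rename_eliminate_mem b₁ c₂)
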